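/- (Bias bound under the null) Let F be the unit ball of an RKHS with kernel k, 0 ≤ k ≤ K, and let X = (x_1,…,x_m) and X' = (x'_1,…,x'_m) be independent i.i.d. m-samples from the same distribution p. Then E_{X,X'} sup_{f∈F} (1/m) Σ_{i=1}^m (f(x_i) − f(x'_i)) ≤ [ (2/m) E_{x,x'∼p}(k(x,x) − k(x,x')) ]^{1/2} ≤ (2K/m)^{1/2}. -/

import Mathlib

/-!
The supremum of `f ↦ ⟪f, v⟫` over the unit ball is `‖v‖`, so the integrand is
`(1/m) ‖∑ i, ψ (x i, x' i)‖` with `ψ (x, x') = φ x - φ x'`, and by Jensen its mean is at most the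
root of its mean square. Since the pairs `(x i, x' i)` are i.i.d., the mean square splits into
diagonal terms `E ‖φ x - φ x'‖² = 2 E k(x,x) - 2 E k(x,x')` and cross terms `E ⟪ψ z, ψ z'⟫` over
independent pairs `z, z'`, which vanish because exchanging `x` and `x'` preserves the law of a
pair and flips the sign of `ψ`.
-/

open MeasureTheory ProbabilityTheory
open scoped RealInnerProductSpace

section

variable {α E : Type*} [MeasurableSpace α] [NormedAddCommGroup E]

lemma MeasureTheory.MeasurePreserving.integral_comp_of_aestronglyMeasurable {β : Type*}
    [MeasurableSpace β] [NormedSpace ℝ E] {μ : Measure α} {ν : Measure β}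
    {T : α → β} (hT : MeasurePreserving T μ ν) {g : β → E} (hg : AEStronglyMeasurable g ν) :
    ∫ x, g (T x) ∂μ = ∫ y, g y ∂ν := by
  rw [← hT.map_eq] at hg ⊢
  exact (integral_map hT.measurable.aemeasurable hg).symm

lemma integral_le_sqrt_integral_sq {μ : Measure α} [IsProbabilityMeasure μ] {g : α → ℝ}
    (hg : MemLp g 2 μ) : ∫ a, g a ∂μ ≤ √(∫ a, g a ^ 2 ∂μ) := by
  refine (le_abs_self _).trans (Real.abs_le_sqrt ?_)
  have hvar := variance_nonneg g μ
  rw [variance_eq_sub hg] at hvar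
  simpa using hvar

lemma measurePreserving_eval_pair_pi {ι : Type*} [Fintype ι] (q : Measure α)
    [IsProbabilityMeasure q] {i j : ι} (hij : i ≠ j) :
    MeasurePreserving (fun y : ι → α => (y i, y j)) (Measure.pi fun _ => q) (q.prod q) := by
  have hindep : IndepFun (fun y : ι → α => y i) (fun y => y j) (Measure.pi fun _ => q) :=
    (iIndepFun_pi (X := fun _ => id) fun _ => aemeasurable_id).indepFun hij
  refine ⟨by fun_prop, ?_⟩
  rw [hindep.map_prod_eq_prod_map_map (measurable_pi_apply i).aemeasurable
      (measurable_pi_apply j).aemeasurable,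
    (measurePreserving_eval _ i).map_eq, (measurePreserving_eval _ j).map_eq]

lemma MeasureTheory.MemLp.comp_fst_sub_comp_snd {r : ENNReal} {q : Measure α}
    [IsProbabilityMeasure q] {φ : α → E} (hφ : MemLp φ r q) :
    MemLp (fun z : α × α => φ z.1 - φ z.2) r (q.prod q) :=
  (hφ.comp_measurePreserving measurePreserving_fst).sub
    (hφ.comp_measurePreserving measurePreserving_snd)

variable [InnerProductSpace ℝ E]

lemma csSup_mul_inner_unit_ball {c : ℝ} (hc : 0 ≤ c) (v : E) :
    sSup {r : ℝ | ∃ f : E, ‖f‖ ≤ 1 ∧ r = c * ⟪f, v⟫} = c * ‖v‖ := by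
  have hub : ∀ r ∈ {r : ℝ | ∃ f : E, ‖f‖ ≤ 1 ∧ r = c * ⟪f, v⟫}, r ≤ c * ‖v‖ := by
    rintro r ⟨f, hf, rfl⟩
    gcongr
    calc ⟪f, v⟫ ≤ ‖f‖ * ‖v‖ := real_inner_le_norm f v
      _ ≤ ‖v‖ := mul_le_of_le_one_left (norm_nonneg v) hf
  have hmem : c * ‖v‖ ∈ {r : ℝ | ∃ f : E, ‖f‖ ≤ 1 ∧ r = c * ⟪f, v⟫} := by
    rcases eq_or_ne v 0 with rfl | hv
    · exact ⟨0, by simp⟩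
    · refine ⟨‖v‖⁻¹ • v, ?_, ?_⟩
      · rw [norm_smul, norm_inv, norm_norm, inv_mul_cancel₀ (norm_ne_zero_iff.2 hv)]
      · rw [real_inner_smul_left, real_inner_self_eq_norm_mul_norm]
        field_simp
  exact le_antisymm (csSup_le ⟨_, hmem⟩ hub) (le_csSup ⟨_, hub⟩ hmem)

lemma csSup_mul_sum_inner_sub_unit_ball {ι : Type*} [Fintype ι] {c : ℝ} (hc : 0 ≤ c)
    (u v : ι → E) :
    sSup {r : ℝ | ∃ f : E, ‖f‖ ≤ 1 ∧ r = c * ∑ i, (⟪f, u i⟫ - ⟪f, v i⟫)} =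
      c * ‖∑ i, (u i - v i)‖ := by
  simp_rw [← inner_sub_right, ← inner_sum]
  exact csSup_mul_inner_unit_ball hc _

lemma MeasureTheory.MemLp.integrable_inner {μ : Measure α} {f g : α → E} (hf : MemLp f 2 μ)
    (hg : MemLp g 2 μ) : Integrable (fun a => ⟪f a, g a⟫) μ :=
  (L2.integrable_inner (hf.toLp f) (hg.toLp g)).congr <| by
    filter_upwards [hf.coeFn_toLp, hg.coeFn_toLp] with a hfa hga
    rw [hfa, hga]

lemma integral_inner_prod_eq_zero_of_comp_eq_neg {q : Measure α} [SFinite q] {σ : α → α}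
    (hσ : MeasurePreserving σ q q) {ψ : α → E} (hψ : AEStronglyMeasurable ψ q)
    (hψσ : ∀ a, ψ (σ a) = -ψ a) :
    ∫ z, ⟪ψ z.1, ψ z.2⟫ ∂(q.prod q) = 0 := by
  have h := (hσ.prod (MeasurePreserving.id q)).integral_comp_of_aestronglyMeasurable
    (g := fun z => ⟪ψ z.1, ψ z.2⟫) (hψ.comp_fst.inner hψ.comp_snd)
  simp only [Prod.map_fst, Prod.map_snd, id, hψσ, inner_neg_left, integral_neg] at h
  linarith

theorem integral_norm_sum_sq_pi {ι : Type*} [Fintype ι] {q : Measure α} [IsProbabilityMeasure q]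
    {ψ : α → E} (hψ : MemLp ψ 2 q) :
    ∫ y, ‖∑ i, ψ (y i)‖ ^ 2 ∂(Measure.pi fun _ : ι => q) =
      Fintype.card ι * ∫ a, ‖ψ a‖ ^ 2 ∂q +
        Fintype.card ι * (Fintype.card ι - 1) * ∫ z, ⟪ψ z.1, ψ z.2⟫ ∂(q.prod q) := by
  classical
  have hcoord (i : ι) : MemLp (fun y : ι → α => ψ (y i)) 2 (Measure.pi fun _ => q) :=
    hψ.comp_measurePreserving (measurePreserving_eval _ i)
  have hentry (i j : ι) : ∫ y, ⟪ψ (y i), ψ (y j)⟫ ∂(Measure.pi fun _ => q) =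
      if i = j then ∫ a, ‖ψ a‖ ^ 2 ∂q else ∫ z, ⟪ψ z.1, ψ z.2⟫ ∂(q.prod q) := by
    split_ifs with hij
    · subst hij
      simpa only [real_inner_self_eq_norm_sq] using
        (measurePreserving_eval (fun _ : ι => q) i).integral_comp_of_aestronglyMeasurable
          (g := fun a => ⟪ψ a, ψ a⟫) (hψ.1.inner hψ.1)
    · exact (measurePreserving_eval_pair_pi q hij).integral_comp_of_aestronglyMeasurable
        (g := fun z => ⟪ψ z.1, ψ z.2⟫) (hψ.1.comp_fst.inner hψ.1.comp_snd)
  calc ∫ y, ‖∑ i, ψ (y i)‖ ^ 2 ∂(Measure.pi fun _ => q)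
      = ∫ y : ι → α, ∑ i, ∑ j, ⟪ψ (y i), ψ (y j)⟫ ∂(Measure.pi fun _ => q) := by
        simp_rw [← real_inner_self_eq_norm_sq, sum_inner, inner_sum]
    _ = ∑ i, ∑ j, ∫ y : ι → α, ⟪ψ (y i), ψ (y j)⟫ ∂(Measure.pi fun _ => q) := by
        rw [integral_finsetSum _ fun i _ =>
          integrable_finsetSum _ fun j _ => (hcoord i).integrable_inner (hcoord j)]
        refine Finset.sum_congr rfl fun i _ => ?_
        exact integral_finsetSum _ fun j _ => (hcoord i).integrable_inner (hcoord j)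
    _ = _ := by
        simp only [hentry, Finset.sum_ite, Finset.filter_eq, Finset.filter_ne, Finset.mem_univ,
          if_true, Finset.sum_const, Finset.card_singleton, Finset.card_erase_of_mem,
          Finset.card_univ, one_smul, nsmul_eq_mul, smul_add, add_right_inj]
        cases Fintype.card ι with
        | zero => simp
        | succ n => push_cast; ring

end

section

variable {X H : Type*} [MeasurableSpace X] [NormedAddCommGroup H] [InnerProductSpace ℝ H]
  {p : Measure X} [IsProbabilityMeasure p] {φ : X → H}

lemma memLp_two_of_inner_self_le (hφ : AEStronglyMeasurable φ p) {K : ℝ}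
    (hK : ∀ x, ⟪φ x, φ x⟫ ≤ K) : MemLp φ 2 p :=
  MemLp.of_bound hφ √K <| ae_of_all _ fun x => by
    rw [norm_eq_sqrt_real_inner]
    exact Real.sqrt_le_sqrt (hK x)

lemma integral_norm_sub_sq_prod (hφ : MemLp φ 2 p) :
    ∫ z, ‖φ z.1 - φ z.2‖ ^ 2 ∂(p.prod p) =
      2 * ((∫ x, ⟪φ x, φ x⟫ ∂p) - ∫ z, ⟪φ z.1, φ z.2⟫ ∂(p.prod p)) := by
  have h1 : MemLp (fun z : X × X => φ z.1) 2 (p.prod p) :=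
    hφ.comp_measurePreserving measurePreserving_fst
  have h2 : MemLp (fun z : X × X => φ z.2) 2 (p.prod p) :=
    hφ.comp_measurePreserving measurePreserving_snd
  have hdiag1 : ∫ z, ⟪φ z.1, φ z.1⟫ ∂(p.prod p) = ∫ x, ⟪φ x, φ x⟫ ∂p :=
    measurePreserving_fst.integral_comp_of_aestronglyMeasurable
      (g := fun x => ⟪φ x, φ x⟫) (hφ.1.inner hφ.1)
  have hdiag2 : ∫ z, ⟪φ z.2, φ z.2⟫ ∂(p.prod p) = ∫ x, ⟪φ x, φ x⟫ ∂p :=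
    measurePreserving_snd.integral_comp_of_aestronglyMeasurable
      (g := fun x => ⟪φ x, φ x⟫) (hφ.1.inner hφ.1)
  have hexpand (z : X × X) : ‖φ z.1 - φ z.2‖ ^ 2 =
      ⟪φ z.1, φ z.1⟫ - 2 * ⟪φ z.1, φ z.2⟫ + ⟪φ z.2, φ z.2⟫ := by
    rw [norm_sub_sq_real, real_inner_self_eq_norm_sq, real_inner_self_eq_norm_sq]
  simp only [hexpand]
  rw [integral_add, integral_sub, integral_const_mul, hdiag1, hdiag2]
  · ring
  · exact h1.integrable_inner h1
  · exact (h1.integrable_inner h2).const_mul 2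
  · exact (h1.integrable_inner h1).sub ((h1.integrable_inner h2).const_mul 2)
  · exact h2.integrable_inner h2

theorem integral_norm_sum_sub_sq_pi {ι : Type*} [Fintype ι] (hφ : MemLp φ 2 p) :
    ∫ y, ‖∑ i, (φ (y i).1 - φ (y i).2)‖ ^ 2 ∂(Measure.pi fun _ : ι => p.prod p) =
      Fintype.card ι * (2 * ((∫ x, ⟪φ x, φ x⟫ ∂p) - ∫ z, ⟪φ z.1, φ z.2⟫ ∂(p.prod p))) := by
  have hcross : ∫ z, ⟪φ z.1.1 - φ z.1.2, φ z.2.1 - φ z.2.2⟫ ∂((p.prod p).prod (p.prod p)) = 0 :=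
    integral_inner_prod_eq_zero_of_comp_eq_neg Measure.measurePreserving_swap
      hφ.comp_fst_sub_comp_snd.1 fun z => (neg_sub _ _).symm
  rw [integral_norm_sum_sq_pi hφ.comp_fst_sub_comp_snd, hcross, integral_norm_sub_sq_prod hφ]
  ring

end

theorem mmd_bias_bound_null_general
    {X : Type*} [MeasurableSpace X] {H : Type*} [NormedAddCommGroup H]
    [InnerProductSpace ℝ H]
    (φ : X → H) (K : ℝ)
    (hk0 : ∀ x y : X, 0 ≤ ⟪φ x, φ y⟫) (hkK : ∀ x y : X, ⟪φ x, φ y⟫ ≤ K)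
    (p : Measure X) [IsProbabilityMeasure p]
    (hp : Integrable φ p)
    (m : ℕ) :
    (∫ ω : (Fin m → X) × (Fin m → X),
        sSup {r : ℝ | ∃ f : H, ‖f‖ ≤ 1 ∧
          r = (1 / (m : ℝ)) *
                ∑ i : Fin m, (⟪f, φ (ω.1 i)⟫ - ⟪f, φ (ω.2 i)⟫)}
        ∂((Measure.pi fun _ : Fin m => p).prod (Measure.pi fun _ : Fin m => p)))
      ≤ Real.sqrt ((2 / (m : ℝ)) *
          ((∫ x, ⟪φ x, φ x⟫ ∂p) - ∫ w : X × X, ⟪φ w.1, φ w.2⟫ ∂p.prod p))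
    ∧ Real.sqrt ((2 / (m : ℝ)) *
          ((∫ x, ⟪φ x, φ x⟫ ∂p) - ∫ w : X × X, ⟪φ w.1, φ w.2⟫ ∂p.prod p))
        ≤ Real.sqrt (2 * K / m) := by
  have hφ : MemLp φ 2 p := memLp_two_of_inner_self_le hp.1 fun x => hkK x x
  have hpairs := (measurePreserving_arrowProdEquivProdArrow X X (Fin m)
    (fun _ => p) (fun _ => p)).symm
  refine ⟨?_, ?_⟩
  · calc _ = ∫ y, (1 / (m : ℝ)) * ‖∑ i, (φ (y i).1 - φ (y i).2)‖
            ∂(Measure.pi fun _ : Fin m => p.prod p) := by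
          simp_rw [csSup_mul_sum_inner_sub_unit_ball (by positivity : (0 : ℝ) ≤ 1 / m)]
          exact hpairs.integral_comp' (fun y => (1 / (m : ℝ)) * ‖∑ i, (φ (y i).1 - φ (y i).2)‖)
      _ ≤ √(∫ y, ((1 / (m : ℝ)) * ‖∑ i, (φ (y i).1 - φ (y i).2)‖) ^ 2
            ∂(Measure.pi fun _ : Fin m => p.prod p)) :=
          integral_le_sqrt_integral_sq ((memLp_finsetSum _ fun i _ =>
            hφ.comp_fst_sub_comp_snd.comp_measurePreserving
              (measurePreserving_eval _ i)).norm.const_mul _)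
      _ = _ := by
          simp_rw [mul_pow]
          rw [integral_const_mul, integral_norm_sum_sub_sq_pi hφ, Fintype.card_fin]
          congr 1
          rcases eq_or_ne (m : ℝ) 0 with hm | hm
          · simp [hm]
          · field_simp
  · have hdiag : ∫ x, ⟪φ x, φ x⟫ ∂p ≤ K :=
      (integral_mono (hφ.integrable_inner hφ) (integrable_const K) fun x => hkK x x).trans
        (by simp)
    have hoff : 0 ≤ ∫ w : X × X, ⟪φ w.1, φ w.2⟫ ∂p.prod p := integral_nonneg fun w => hk0 _ _
    gcongr
    rw [div_mul_eq_mul_div]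
    gcongr
    linarith

/-- Bias bound under the null: for two independent i.i.d. `m`-samples from
`p`, `E sup_{‖f‖≤1} (1/m) Σ (f(x_i) - f(x'_i)) ≤ √((2/m) E(k(x,x) - k(x,x'))) ≤ √(2K/m)`. -/
theorem mmd_bias_bound_null
    {X : Type*} [MeasurableSpace X] {H : Type*} [NormedAddCommGroup H]
    [InnerProductSpace ℝ H] [CompleteSpace H]
    (φ : X → H) (K : ℝ)
    (hk0 : ∀ x y : X, 0 ≤ ⟪φ x, φ y⟫) (hkK : ∀ x y : X, ⟪φ x, φ y⟫ ≤ K)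
    (p : Measure X) [IsProbabilityMeasure p]
    (hp : Integrable φ p) (hdiag : Integrable (fun x => ⟪φ x, φ x⟫) p)
    (m : ℕ) (hm : 1 ≤ m) :
    (∫ ω : (Fin m → X) × (Fin m → X),
        sSup {r : ℝ | ∃ f : H, ‖f‖ ≤ 1 ∧
          r = (1 / (m : ℝ)) *
                ∑ i : Fin m, (⟪f, φ (ω.1 i)⟫ - ⟪f, φ (ω.2 i)⟫)}
        ∂((Measure.pi fun _ : Fin m => p).prod (Measure.pi fun _ : Fin m => p)))
      ≤ Real.sqrt ((2 / (m : ℝ)) *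
          ((∫ x, ⟪φ x, φ x⟫ ∂p) - ∫ w : X × X, ⟪φ w.1, φ w.2⟫ ∂p.prod p))
    ∧ Real.sqrt ((2 / (m : ℝ)) *
          ((∫ x, ⟪φ x, φ x⟫ ∂p) - ∫ w : X × X, ⟪φ w.1, φ w.2⟫ ∂p.prod p))
        ≤ Real.sqrt (2 * K / m) :=
  mmd_bias_bound_null_general φ K hk0 hkK p hp m
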